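/- arXiv:math/0610399 — 11 statements merged into one kernel-verified Lean document; each statement's English description precedes it below -/
import Mathlib

section
/- Every real root of a degree d SNN polynomial lies in the interval [-d, d-1]. -/
/-! Each basis polynomial `C(x + d - j, d)` with `j ≤ d` has its roots among the integers
`j - d, …, j - 1 ⊆ [-d, d - 1]`, so beyond `d - 1` all of them are positive and below `-d` all of
them have the sign `(-1)^d`. A nonzero nonnegative combination of them therefore cannot vanish
outside `[-d, d - 1]`. -/

/-- The binomial coefficient polynomial `C(x + d - j, d)` evaluated at a real number. -/
noncomputable def binomR (d j : ℕ) (x : ℝ) : ℝ :=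
  (∏ k ∈ Finset.range d, (x + (d : ℝ) - (j : ℝ) - (k : ℝ))) / (d.factorial : ℝ)

open Finset

lemma sum_mul_pos_of_nonneg_of_ne_zero {ι R : Type*} [Fintype ι] [Semiring R] [PartialOrder R]
    [IsStrictOrderedRing R] {w g : ι → R} (hw : ∀ i, 0 ≤ w i) (hw₀ : w ≠ 0)
    (hg : ∀ i, 0 < g i) : 0 < ∑ i, w i * g i := by
  obtain ⟨i, hi⟩ := Function.ne_iff.mp hw₀
  exact sum_pos' (fun j _ => mul_nonneg (hw j) (hg j).le)
    ⟨i, mem_univ i, mul_pos ((hw i).lt_of_ne' hi) (hg i)⟩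

lemma binomR_pos_of_sub_one_lt {d j : ℕ} (hj : j ≤ d) {x : ℝ} (hx : (d : ℝ) - 1 < x) :
    0 < binomR d j x := by
  refine div_pos (prod_pos fun k hk => ?_) (by positivity)
  have hk : (k : ℝ) + 1 ≤ d := by exact_mod_cast mem_range.mp hk
  have hj : (j : ℝ) ≤ d := by exact_mod_cast hj
  linarith

lemma neg_one_pow_mul_binomR_pos_of_lt_neg {d : ℕ} (j : ℕ) {x : ℝ} (hx : x < -(d : ℝ)) :
    0 < (-1) ^ d * binomR d j x := by
  rw [binomR, ← mul_div_assoc]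
  nth_rw 1 [← card_range d]
  rw [← prod_neg]
  refine div_pos (prod_pos fun k _ => ?_) (by positivity)
  have : (0 : ℝ) ≤ j + k := by positivity
  linarith

/-- Every real root of a degree `d` SNN polynomial lies in `[-d, d-1]`. -/
theorem stmt_2 (d : ℕ) (h : Fin (d + 1) → ℝ)
    (hnonneg : ∀ j, 0 ≤ h j) (hne : h ≠ 0) (x : ℝ)
    (hroot : ∑ j : Fin (d + 1), h j * binomR d (j : ℕ) x = 0) :
    -(d : ℝ) ≤ x ∧ x ≤ (d : ℝ) - 1 := by
  constructor
  · by_contra! hx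
    have hpos := sum_mul_pos_of_nonneg_of_ne_zero hnonneg hne
      fun j => neg_one_pow_mul_binomR_pos_of_lt_neg (j : ℕ) hx
    simp only [mul_left_comm (h _), ← mul_sum, hroot, mul_zero, lt_irrefl] at hpos
  · by_contra! hx
    have hpos := sum_mul_pos_of_nonneg_of_ne_zero hnonneg hne
      fun j => binomR_pos_of_sub_one_lt (Nat.lt_succ_iff.mp j.isLt) hx
    exact hpos.ne' hroot
end

section
/- All complex roots of a degree d SNN polynomial lie in the closed disc centered at -1/2 with radius d(d - 1/2). -/
/-- The binomial coefficient polynomial `C(z + d - j, d)` evaluated at a complex number. -/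
noncomputable def binomC (d j : ℕ) (z : ℂ) : ℂ :=
  (∏ k ∈ Finset.range d, (z + (d : ℂ) - (j : ℂ) - (k : ℂ))) / (d.factorial : ℂ)

/-!
Suppose `z` is a root with `‖z + 1/2‖ > d (d - 1/2)`. Then `z ∉ {0, …, d - 1}`, and telescoping
the ratios of consecutive binomials gives
`binomC d j z = binomC d d z * ∏_{j ≤ i < d} (z + d - i) / (z - i)`.
The argument of `(z + d - i) / (z - i)` is the angle under which the segment `[i - d, i]` is seen
from `z`; as `z` is far from that segment, the angle is less than `π / (2d)`. A product of at most
`d` such ratios has argument in `(-π/2, π/2)`, hence positive real part, so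
`∑ h_j binomC d j z = binomC d d z * w` with `Re w > 0`, which is not `0`.
-/

open Real Finset

theorem Complex.abs_arg_lt_of_abs_im_mul_cos_lt {z : ℂ} {θ : ℝ} (hθ₀ : 0 < θ) (hθ : θ ≤ π / 2)
    (h : |z.im| * Real.cos θ < z.re * Real.sin θ) : |arg z| < θ := by
  have hsin : 0 < Real.sin θ := Real.sin_pos_of_pos_of_lt_pi hθ₀ (by linarith [pi_pos])
  have hcos : 0 ≤ Real.cos θ := Real.cos_nonneg_of_mem_Icc ⟨by linarith, hθ⟩
  have hre : 0 < z.re := pos_of_mul_pos_left ((mul_nonneg (abs_nonneg _) hcos).trans_lt h) hsin.le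
  have hnorm : 0 < ‖z‖ := norm_pos_iff.mpr fun hz => by simp [hz] at hre
  have him : |z.im| < ‖z‖ * Real.sin θ := by
    have hsq : z.im ^ 2 < (‖z‖ * Real.sin θ) ^ 2 := by
      have := mul_self_lt_mul_self (mul_nonneg (abs_nonneg _) hcos) h
      rw [mul_pow, Complex.sq_norm, Complex.normSq_apply]
      nlinarith [Real.sin_sq_add_cos_sq θ, sq_abs z.im]
    exact abs_lt_of_sq_lt_sq hsq (by positivity)
  have ht : |z.im / ‖z‖| < Real.sin θ := by
    rwa [abs_div, abs_norm, div_lt_iff₀ hnorm, mul_comm]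
  have hθmem : θ ∈ Set.Ioc (-(π / 2)) (π / 2) := ⟨by linarith [pi_pos], hθ⟩
  rw [arg_of_re_nonneg hre.le, abs_lt, neg_lt, ← arcsin_neg, arcsin_lt_iff_lt_sin' hθmem,
    arcsin_lt_iff_lt_sin' hθmem]
  exact ⟨neg_lt.mp (neg_lt_of_abs_lt ht), lt_of_abs_lt ht⟩

theorem Complex.re_prod_pos_of_sum_abs_arg_lt {ι : Type*} {s : Finset ι} {w : ι → ℂ}
    (hw : ∀ i ∈ s, w i ≠ 0) (harg : ∑ i ∈ s, |arg (w i)| < π / 2) :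
    0 < (∏ i ∈ s, w i).re := by
  have hpolar : ∏ i ∈ s, w i =
      ((∏ i ∈ s, ‖w i‖ : ℝ) : ℂ) * exp ((∑ i ∈ s, arg (w i) : ℝ) * I) := by
    rw [ofReal_prod, ofReal_sum, sum_mul, exp_sum, ← prod_mul_distrib]
    exact prod_congr rfl fun i _ => (norm_mul_exp_arg_mul_I (w i)).symm
  rw [hpolar, re_ofReal_mul, exp_ofReal_mul_I_re]
  exact mul_pos (prod_pos fun i hi => norm_pos_iff.mpr (hw i hi))
    (Real.cos_pos_of_mem_Ioo (abs_lt.mp ((abs_sum_le_sum_abs _ _).trans_lt harg)))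

/-- The segment `[-a, a]` is seen under an angle less than `2φ` from every point outside the
disc of radius `a cot φ` about its midpoint. -/
theorem Complex.abs_arg_add_div_sub_lt {v : ℂ} {a φ : ℝ} (ha : 0 ≤ a) (hφ₀ : 0 < φ)
    (hφ : φ ≤ π / 4) (hv : a * Real.cos φ < ‖v‖ * Real.sin φ) :
    (v + a) / (v - a) ≠ 0 ∧ |arg ((v + a) / (v - a))| < 2 * φ := by
  have hs : 0 < Real.sin φ := Real.sin_pos_of_pos_of_lt_pi hφ₀ (by linarith [pi_pos])
  have hc : 0 < Real.cos φ := Real.cos_pos_of_mem_Ioo ⟨by linarith [pi_pos], by linarith [pi_pos]⟩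
  have hsc : Real.sin φ ≤ Real.cos φ := by
    rw [← Real.sin_pi_div_two_sub]
    exact Real.sin_le_sin_of_le_of_le_pi_div_two (by linarith) (by linarith) (by linarith)
  have hr : 0 < ‖v‖ := pos_of_mul_pos_left ((mul_nonneg ha hc.le).trans_lt hv) hs.le
  have hva : v - a ≠ 0 := fun h => by
    rw [sub_eq_zero.mp h, norm_real, norm_of_nonneg ha] at hv
    nlinarith
  have hn : 0 < normSq (v - a) := normSq_pos.mpr hva
  set w := (v + a) / (v - a)
  have hre : w.re = (‖v‖ ^ 2 - a ^ 2) / normSq (v - a) := by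
    rw [div_re, ← add_div, Complex.sq_norm, normSq_apply v]
    simp only [add_re, sub_re, ofReal_re, add_im, sub_im, ofReal_im]
    ring
  have him : w.im = -(2 * a * v.im) / normSq (v - a) := by
    rw [div_im, ← sub_div]
    simp only [add_re, sub_re, ofReal_re, add_im, sub_im, ofReal_im]
    ring
  have hsector : |w.im| * Real.cos (2 * φ) < w.re * Real.sin (2 * φ) := by
    rw [hre, him, abs_div, abs_of_pos hn, div_mul_eq_mul_div, div_mul_eq_mul_div,
      div_lt_div_iff_of_pos_right hn, Real.cos_two_mul', Real.sin_two_mul, abs_neg,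
      abs_mul, abs_of_nonneg (by positivity : 0 ≤ 2 * a)]
    -- `(r² - a²) sin 2φ - 2ar cos 2φ = 2 (r sin φ - a cos φ) (r cos φ + a sin φ)`
    have hkey : 0 < (‖v‖ * Real.sin φ - a * Real.cos φ) * (‖v‖ * Real.cos φ + a * Real.sin φ) :=
      mul_pos (by linarith) (by positivity)
    calc 2 * a * |v.im| * (Real.cos φ ^ 2 - Real.sin φ ^ 2)
        ≤ 2 * a * ‖v‖ * (Real.cos φ ^ 2 - Real.sin φ ^ 2) := by
          gcongr
          · nlinarith
          · exact abs_im_le_norm v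
      _ < (‖v‖ ^ 2 - a ^ 2) * (2 * Real.sin φ * Real.cos φ) := by nlinarith
  refine ⟨fun hw => ?_, abs_arg_lt_of_abs_im_mul_cos_lt (by positivity) (by linarith) hsector⟩
  simp [hw] at hsector

theorem natCast_mul_cos_le_mul_sin (d : ℕ) (hd : 1 ≤ d) :
    (d : ℝ) * Real.cos (π / (4 * d)) ≤ (2 * d ^ 2 - 2 * d + 1) * Real.sin (π / (4 * d)) := by
  rcases (show d = 1 ∨ d = 2 ∨ 3 ≤ d by omega) with rfl | rfl | hd3
  · norm_num [Real.cos_pi_div_four, Real.sin_pi_div_four]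
  · rw [show π / (4 * ((2 : ℕ) : ℝ)) = π / 8 by norm_num, Real.cos_pi_div_eight,
      Real.sin_pi_div_eight]
    have hle : √(2 + √2) * 2 ≤ √(2 - √2) * 5 := by
      have h2 : √2 ≤ 42 / 29 := by rw [Real.sqrt_le_left (by norm_num)]; norm_num
      have ha := Real.sq_sqrt (show 0 ≤ 2 + √2 by positivity)
      have hb := Real.sq_sqrt (show 0 ≤ 2 - √2 by nlinarith)
      nlinarith [Real.sqrt_nonneg (2 + √2), Real.sqrt_nonneg (2 - √2)]
    norm_num
    linarith
  · have hd3' : (3 : ℝ) ≤ d := by exact_mod_cast hd3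
    set φ := π / (4 * d)
    have hφ₀ : 0 < φ := by positivity
    have hφ : φ < π / 2 := by
      rw [div_lt_div_iff₀ (by positivity) (by norm_num)]; nlinarith [pi_pos]
    have hc : 0 < Real.cos φ := Real.cos_pos_of_mem_Ioo ⟨by linarith, hφ⟩
    have htan : φ * Real.cos φ < Real.sin φ := by
      have := Real.lt_tan hφ₀ hφ
      rwa [Real.tan_eq_sin_div_cos, lt_div_iff₀ hc] at this
    have hpoly : (d : ℝ) ≤ (2 * d ^ 2 - 2 * d + 1) * φ := by
      rw [mul_div_assoc', le_div_iff₀ (by positivity)]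
      have hq : 0 ≤ 2 * (d : ℝ) ^ 2 - 2 * d + 1 := by nlinarith
      nlinarith [mul_nonneg hq (sub_nonneg.mpr pi_gt_three.le),
        mul_nonneg (by positivity : (0 : ℝ) ≤ d) (sub_nonneg.mpr hd3')]
    calc (d : ℝ) * Real.cos φ ≤ (2 * d ^ 2 - 2 * d + 1) * (φ * Real.cos φ) := by
          rw [← mul_assoc]; exact mul_le_mul_of_nonneg_right hpoly hc.le
      _ ≤ (2 * d ^ 2 - 2 * d + 1) * Real.sin φ := by
          gcongr
          nlinarith

theorem binomC_mul_sub (d j : ℕ) (z : ℂ) :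
    binomC d j z * (z - j) = binomC d (j + 1) z * (z + d - j) := by
  simp only [binomC, div_mul_eq_mul_div]
  congr 1
  have h := prod_range_succ' (fun k : ℕ => z + (d : ℂ) - (j : ℂ) - (k : ℂ)) d
  rw [prod_range_succ] at h
  push_cast at h ⊢
  convert h using 2 <;> ring_nf

theorem binomC_mul_prod_Ico {d j : ℕ} (hj : j ≤ d) (z : ℂ) :
    binomC d j z * ∏ i ∈ Ico j d, (z - i) = binomC d d z * ∏ i ∈ Ico j d, (z + d - i) := by
  induction hj using Nat.decreasingInduction with
  | self => simp
  | of_succ j hj ih =>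
    rw [prod_eq_prod_Ico_succ_bot hj, prod_eq_prod_Ico_succ_bot hj, ← mul_assoc,
      binomC_mul_sub, mul_right_comm, ih]
    ring

theorem binomC_self_ne_zero {d : ℕ} {z : ℂ} (hz : ∀ i < d, z - i ≠ 0) : binomC d d z ≠ 0 := by
  refine div_ne_zero (prod_ne_zero_iff.mpr fun k hk => ?_) (by exact_mod_cast d.factorial_ne_zero)
  simpa using hz k (mem_range.mp hk)

theorem binomC_eq_mul_prod_div {d j : ℕ} (hj : j ≤ d) {z : ℂ} (hz : ∀ i < d, z - i ≠ 0) :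
    binomC d j z = binomC d d z * ∏ i ∈ Ico j d, (z + d - i) / (z - i) := by
  have hprod : ∏ i ∈ Ico j d, (z - i) ≠ 0 :=
    prod_ne_zero_iff.mpr fun i hi => hz i (mem_Ico.mp hi).2
  rw [prod_div_distrib, ← mul_div_assoc, ← binomC_mul_prod_Ico hj, mul_div_cancel_right₀ _ hprod]

theorem abs_arg_add_nat_div_sub_lt {d i : ℕ} (hi : i < d) {z : ℂ}
    (hz : (d : ℝ) * (d - 1 / 2) < ‖z + 1 / 2‖) :
    (z + d - i) / (z - i) ≠ 0 ∧ |Complex.arg ((z + d - i) / (z - i))| < π / (2 * d) := by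
  have hd : (1 : ℝ) ≤ d := by exact_mod_cast (show 1 ≤ d by omega)
  have hi' : (i : ℝ) + 1 ≤ d := by exact_mod_cast hi
  have hv : (d : ℝ) * d - d + 1 / 2 < ‖z - ((i - d / 2 : ℝ) : ℂ)‖ := by
    have hc : ‖(((i : ℝ) - d / 2 + 1 / 2 : ℝ) : ℂ)‖ ≤ (d - 1) / 2 := by
      rw [Complex.norm_real, Real.norm_eq_abs, abs_le]
      constructor <;> linarith [(i.cast_nonneg : (0 : ℝ) ≤ i)]
    have := norm_sub_norm_le (z + 1 / 2) (((i : ℝ) - d / 2 + 1 / 2 : ℝ) : ℂ)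
    rw [show z + 1 / 2 - (((i : ℝ) - d / 2 + 1 / 2 : ℝ) : ℂ) = z - ((i - d / 2 : ℝ) : ℂ) by
      push_cast; ring] at this
    linarith
  have hφ : π / (4 * d) ≤ π / 4 :=
    div_le_div_of_nonneg_left pi_pos.le (by norm_num) (by linarith)
  have hsin : 0 < Real.sin (π / (4 * d)) :=
    Real.sin_pos_of_pos_of_lt_pi (by positivity) (by linarith [pi_pos])
  have hcos_lt : (d / 2 : ℝ) * Real.cos (π / (4 * d)) <
      ‖z - ((i - d / 2 : ℝ) : ℂ)‖ * Real.sin (π / (4 * d)) := by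
    have := natCast_mul_cos_le_mul_sin d (by exact_mod_cast hd)
    nlinarith
  have key := Complex.abs_arg_add_div_sub_lt (by positivity) (by positivity) hφ hcos_lt
  rwa [show z - ((i - d / 2 : ℝ) : ℂ) + ((d / 2 : ℝ) : ℂ) = z + d - i by push_cast; ring,
    show z - ((i - d / 2 : ℝ) : ℂ) - ((d / 2 : ℝ) : ℂ) = z - i by push_cast; ring,
    show 2 * (π / (4 * d)) = π / (2 * d) by field_simp; ring] at key

theorem re_prod_Ico_add_nat_div_sub_pos {d j : ℕ} {z : ℂ}
    (hz : (d : ℝ) * (d - 1 / 2) < ‖z + 1 / 2‖) :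
    0 < (∏ i ∈ Ico j d, (z + d - i) / (z - i)).re := by
  refine Complex.re_prod_pos_of_sum_abs_arg_lt
    (fun i hi => (abs_arg_add_nat_div_sub_lt (mem_Ico.mp hi).2 hz).1) ?_
  rcases (Ico j d).eq_empty_or_nonempty with hempty | hne
  · simp [hempty, pi_pos]
  have hd : (d : ℝ) ≠ 0 := by
    obtain ⟨i, hi⟩ := hne
    exact_mod_cast (show d ≠ 0 by have := (mem_Ico.mp hi).2; omega)
  calc ∑ i ∈ Ico j d, |Complex.arg ((z + d - i) / (z - i))|
      < ∑ _i ∈ Ico j d, π / (2 * d) :=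
        sum_lt_sum_of_nonempty hne fun i hi => (abs_arg_add_nat_div_sub_lt (mem_Ico.mp hi).2 hz).2
    _ ≤ d * (π / (2 * d)) := by
        rw [sum_const, Nat.card_Ico, nsmul_eq_mul]
        gcongr
        exact_mod_cast d.sub_le j
    _ = π / 2 := by field_simp

/-- All complex roots of a degree `d` SNN polynomial lie in the closed disc centered
at `-1/2` with radius `d(d - 1/2)`. -/
theorem stmt_3 (d : ℕ) (h : Fin (d + 1) → ℝ)
    (hnonneg : ∀ j, 0 ≤ h j) (hne : h ≠ 0) (z : ℂ)
    (hroot : ∑ j : Fin (d + 1), (h j : ℂ) * binomC d (j : ℕ) z = 0) :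
    ‖z + 1 / 2‖ ≤ (d : ℝ) * ((d : ℝ) - 1 / 2) := by
  by_contra! hz
  have hzi : ∀ i < d, z - i ≠ 0 := fun i hi =>
    (div_ne_zero_iff.mp (abs_arg_add_nat_div_sub_lt hi hz).1).2
  have hfactor : binomC d d z *
      ∑ j : Fin (d + 1), (h j : ℂ) * ∏ i ∈ Ico (j : ℕ) d, (z + d - i) / (z - i) = 0 := by
    rw [mul_sum, ← hroot]
    refine sum_congr rfl fun j _ => ?_
    rw [binomC_eq_mul_prod_div (Nat.lt_succ_iff.mp j.isLt) hzi]
    ring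
  have hsum := congrArg Complex.re
    ((mul_eq_zero.mp hfactor).resolve_left (binomC_self_ne_zero hzi))
  simp only [Complex.re_sum, Complex.re_ofReal_mul, Complex.zero_re] at hsum
  obtain ⟨j₀, hj₀⟩ := Function.ne_iff.mp hne
  have hterm_pos := re_prod_Ico_add_nat_div_sub_pos (j := j₀) hz
  refine (sum_pos' (fun j _ => mul_nonneg (hnonneg j) (re_prod_Ico_add_nat_div_sub_pos hz).le)
    ⟨j₀, mem_univ _, mul_pos ((hnonneg j₀).lt_of_ne' hj₀) hterm_pos⟩).ne' hsum
end

section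
/- For d \ge 2, no SNN polynomial of degree d has a root in the open pointed cone in \mathbb{C} with vertex d-1, angular width 2\pi/d, and bisecting ray (d-1, \infty); that is, no root z satisfies Re(z) > d-1 and |Arg(z - (d-1))| < \pi/d. -/
/-!
Put `w = z - (d - 1)`, a point of the open right half-plane with `|arg w| < π / d`. For `j ≤ d`
each of the `d` factors `z + d - j - k` of `binomC d j z` is `w` plus a nonnegative real, so its
argument lies between `0` and `arg w`, i.e. within `|arg w| / 2` of `arg w / 2`. Hence every
`binomC d j z` has argument within `d |arg w| / 2 < π / 2` of `d arg w / 2`: all of them lie in one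
open half-plane, and a nonzero nonnegative combination of them cannot vanish.
-/

open Complex Finset Set Real

lemma div_mem_uIcc_zero_div {a r s : ℝ} (hr : 0 < r) (hrs : r ≤ s) : a / s ∈ uIcc 0 (a / r) := by
  rcases le_total 0 a with ha | ha
  · exact mem_uIcc_of_le (div_nonneg ha (hr.le.trans hrs)) (div_le_div_of_nonneg_left ha hr hrs)
  · refine mem_uIcc_of_ge ?_ (div_nonpos_of_nonpos_of_nonneg ha (hr.le.trans hrs))
    rw [div_le_div_iff₀ hr (hr.trans_le hrs)]
    nlinarith

lemma abs_sub_half_le_of_mem_uIcc_zero {x a : ℝ} (hx : x ∈ uIcc 0 a) : |x - a / 2| ≤ |a| / 2 := by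
  rw [abs_le]
  rcases mem_uIcc.mp hx with ⟨h₁, h₂⟩ | ⟨h₁, h₂⟩ <;> cases abs_cases a <;> constructor <;> linarith

lemma arg_add_ofReal_mem_uIcc {w : ℂ} (hw : 0 < w.re) {c : ℝ} (hc : 0 ≤ c) :
    arg (w + c) ∈ uIcc 0 (arg w) := by
  have hre : (w + c).re = w.re + c := by simp
  have hnorm : ‖w‖ ≤ ‖w + c‖ := by
    rw [norm_def, norm_def, normSq_apply, normSq_apply, hre, add_im, ofReal_im, add_zero]
    gcongr <;> linarith
  rw [arg_of_re_nonneg (x := w + c) (by rw [hre]; linarith), arg_of_re_nonneg hw.le, add_im,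
    ofReal_im, add_zero, ← Real.arcsin_zero]
  exact Real.monotone_arcsin.mapsTo_uIcc
    (div_mem_uIcc_zero_div (norm_pos_iff.mpr (ne_zero_of_re_pos hw)) hnorm)

lemma re_exp_mul_prod_pos {ι : Type*} (s : Finset ι) (w : ι → ℂ) (ψ α : ℝ)
    (hw : ∀ k ∈ s, w k ≠ 0) (harg : ∀ k ∈ s, |arg (w k) - ψ| ≤ α) (hα : #s * α < π / 2) :
    0 < (exp (-(#s * ψ : ℝ) * I) * ∏ k ∈ s, w k).re := by
  have hpolar : exp (-(#s * ψ : ℝ) * I) * ∏ k ∈ s, w k =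
      ((∏ k ∈ s, ‖w k‖ : ℝ) : ℂ) * exp ((∑ k ∈ s, (arg (w k) - ψ) : ℝ) * I) := by
    conv_lhs => rw [prod_congr rfl fun k _ => (norm_mul_exp_arg_mul_I (w k)).symm]
    rw [prod_mul_distrib, ← Complex.exp_sum, mul_left_comm, ← Complex.exp_add, sum_sub_distrib,
      sum_const, nsmul_eq_mul]
    push_cast
    rw [← sum_mul]
    ring_nf
  have hsum : |∑ k ∈ s, (arg (w k) - ψ)| < π / 2 :=
    ((abs_sum_le_sum_abs _ _).trans (sum_le_card_nsmul s _ α harg)).trans_lt (by simpa using hα)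
  rw [hpolar, re_ofReal_mul, exp_ofReal_mul_I_re]
  exact mul_pos (prod_pos fun k hk => norm_pos_iff.mpr (hw k hk))
    (Real.cos_pos_of_mem_Ioo (abs_lt.mp hsum))

lemma sum_ofReal_mul_ne_zero {ι : Type*} [Fintype ι] {a : ι → ℝ} (ha : ∀ i, 0 ≤ a i) (hne : a ≠ 0)
    (x : ι → ℂ) (u : ℂ) (hx : ∀ i, 0 < (u * x i).re) : ∑ i, (a i : ℂ) * x i ≠ 0 := by
  obtain ⟨i, hi⟩ := Function.ne_iff.mp hne
  intro h
  have hre := congrArg (fun y => (u * y).re) h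
  simp only [mul_sum, re_sum, mul_left_comm u, re_ofReal_mul, mul_zero, zero_re] at hre
  refine (sum_pos' (fun j _ => mul_nonneg (ha j) (hx j).le) ⟨i, mem_univ i, ?_⟩).ne' hre
  exact mul_pos ((ha i).lt_of_ne' hi) (hx i)

lemma binomC_eq_prod_add_ofReal (d j : ℕ) (z : ℂ) :
    binomC d j z =
      (∏ k ∈ range d, ((z - (d - 1)) + ((2 * d - 1 - j - k : ℝ) : ℂ))) / (d.factorial : ℂ) := by
  unfold binomC
  congr 1
  refine prod_congr rfl fun k _ => ?_
  push_cast
  ring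

lemma re_exp_mul_binomC_pos {d j : ℕ} (hj : j ≤ d) {z : ℂ} (hre : (d : ℝ) - 1 < z.re)
    (harg : |arg (z - (d - 1))| < π / d) :
    0 < (exp (-(d * (arg (z - (d - 1)) / 2) : ℝ) * I) * binomC d j z).re := by
  set w := z - (d - 1)
  have hw : 0 < w.re := by simp [w]; linarith
  have hd : (0 : ℝ) < d := (div_pos_iff_of_pos_left pi_pos).mp ((abs_nonneg _).trans_lt harg)
  have hshift : ∀ k ∈ range d, 0 ≤ (2 * d - 1 - j - k : ℝ) := by
    intro k hk
    have hj' : (j : ℝ) ≤ d := by exact_mod_cast hj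
    have hk' : (k : ℝ) + 1 ≤ d := by exact_mod_cast mem_range.mp hk
    linarith
  have hα : (#(range d) : ℝ) * (|arg w| / 2) < π / 2 := by
    rw [card_range]
    have := (lt_div_iff₀ hd).mp harg
    linarith
  have hprod := re_exp_mul_prod_pos (range d) (fun k => w + ((2 * d - 1 - j - k : ℝ) : ℂ))
    (arg w / 2) (|arg w| / 2)
    (fun k hk => ne_zero_of_re_pos (by simpa using add_pos_of_pos_of_nonneg hw (hshift k hk)))
    (fun k hk => abs_sub_half_le_of_mem_uIcc_zero (arg_add_ofReal_mem_uIcc hw (hshift k hk))) hα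
  rw [card_range] at hprod
  rw [binomC_eq_prod_add_ofReal, ← mul_div_assoc, div_natCast_re]
  exact div_pos hprod (by positivity)

theorem stmt_4_general (d : ℕ) (h : Fin (d + 1) → ℝ)
    (hnonneg : ∀ j, 0 ≤ h j) (hne : h ≠ 0) (z : ℂ)
    (hroot : ∑ j : Fin (d + 1), (h j : ℂ) * binomC d (j : ℕ) z = 0) :
    ¬((d : ℝ) - 1 < z.re ∧ |Complex.arg (z - ((d : ℂ) - 1))| < Real.pi / d) := fun ⟨hre, harg⟩ =>
  sum_ofReal_mul_ne_zero hnonneg hne _ _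
    (fun j => re_exp_mul_binomC_pos (Nat.lt_succ_iff.mp j.isLt) hre harg) hroot

/-- For `d ≥ 2`, no SNN polynomial of degree `d` has a root in the open pointed cone
with vertex `d - 1`, angular width `2π/d`, bisecting ray `(d-1, ∞)`. -/
theorem stmt_4 (d : ℕ) (hd : 2 ≤ d) (h : Fin (d + 1) → ℝ)
    (hnonneg : ∀ j, 0 ≤ h j) (hne : h ≠ 0) (z : ℂ)
    (hroot : ∑ j : Fin (d + 1), (h j : ℂ) * binomC d (j : ℕ) z = 0) :
    ¬((d : ℝ) - 1 < z.re ∧ |Complex.arg (z - ((d : ℂ) - 1))| < Real.pi / d) :=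
  stmt_4_general d h hnonneg hne z hroot
end

section
/- For d \ge 2, no SNN polynomial of degree d has a root z with Re(z) < -d and |Arg(-(z + d))| < \pi/d (the open pointed cone with vertex -d, angular width 2\pi/d, bisecting ray (-\infty, -d)). -/
/-! With `w = -(z + d)` we have `binomC d j z = (-1)^d / d! * ∏_{k<d} (w + (j + k))`.
As `Re w > 0`, adding a nonnegative real to `w` moves its argument towards `0`, so every factor
has argument between `0` and `θ = arg w`, and each product has argument within `d|θ|/2 < π/2` of
`dθ/2`. Hence all `d + 1` products lie in the open half-plane `Re (e^{-idθ/2} u) > 0`, and so does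
every nontrivial nonnegative combination of them; in particular it is not `0`. -/

open Complex Finset

namespace Complex

theorem norm_le_norm_add_ofReal {w : ℂ} (hw : 0 ≤ w.re) {m : ℝ} (hm : 0 ≤ m) :
    ‖w‖ ≤ ‖w + m‖ := by
  rw [norm_def, norm_def]
  gcongr
  simp only [normSq_apply, add_re, add_im, ofReal_re, ofReal_im, add_zero]
  nlinarith

theorem abs_arg_add_ofReal_sub_half_le {w : ℂ} (hw : 0 < w.re) {m : ℝ} (hm : 0 ≤ m) :
    |arg (w + m) - arg w / 2| ≤ |arg w| / 2 := by
  have hwm : 0 ≤ (w + m).re := by simp only [add_re, ofReal_re]; linarith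
  have hnorm : 0 < ‖w‖ := norm_pos_iff.mpr fun h ↦ by simp [h] at hw
  have hle := norm_le_norm_add_ofReal hw.le hm
  have him : (w + m).im = w.im := by simp
  rcases le_total 0 w.im with hi | hi
  · have h0 : 0 ≤ arg (w + m) := arg_nonneg_iff.mpr (him ▸ hi)
    have h1 : arg (w + m) ≤ arg w := by
      rw [arg_of_re_nonneg hwm, arg_of_re_nonneg hw.le, him]
      exact Real.arcsin_le_arcsin (div_le_div_of_nonneg_left hi hnorm hle)
    rw [abs_of_nonneg (h0.trans h1), abs_le]
    constructor <;> linarith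
  · have h0 : arg (w + m) ≤ 0 := by
      rw [arg_of_re_nonneg hwm, him]
      exact Real.arcsin_nonpos.mpr (div_nonpos_of_nonpos_of_nonneg hi (norm_nonneg _))
    have h1 : arg w ≤ arg (w + m) := by
      rw [arg_of_re_nonneg hwm, arg_of_re_nonneg hw.le, him]
      refine Real.arcsin_le_arcsin ?_
      have := div_le_div_of_nonneg_left (neg_nonneg.mpr hi) hnorm hle
      rw [neg_div, neg_div] at this
      linarith
    rw [abs_of_nonpos (h1.trans h0), abs_le]
    constructor <;> linarith

theorem abs_sum_arg_add_ofReal_sub_le {ι : Type*} (s : Finset ι) {w : ℂ} (hw : 0 < w.re)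
    {m : ι → ℝ} (hm : ∀ i ∈ s, 0 ≤ m i) :
    |∑ i ∈ s, arg (w + m i) - #s * arg w / 2| ≤ #s * |arg w| / 2 :=
  calc |∑ i ∈ s, arg (w + m i) - #s * arg w / 2|
      = |∑ i ∈ s, (arg (w + m i) - arg w / 2)| := by
        rw [sum_sub_distrib, sum_const, nsmul_eq_mul, mul_div_assoc]
    _ ≤ ∑ i ∈ s, |arg (w + m i) - arg w / 2| := abs_sum_le_sum_abs _ _
    _ ≤ ∑ i ∈ s, |arg w| / 2 := sum_le_sum fun i hi ↦ abs_arg_add_ofReal_sub_half_le hw (hm i hi)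
    _ = #s * |arg w| / 2 := by rw [sum_const, nsmul_eq_mul, mul_div_assoc]

theorem re_exp_mul_prod_pos {ι : Type*} {s : Finset ι} {f : ι → ℂ} (hf : ∀ i ∈ s, f i ≠ 0)
    {φ : ℝ} (hφ : |∑ i ∈ s, arg (f i) - φ| < Real.pi / 2) :
    0 < (exp (-φ * I) * ∏ i ∈ s, f i).re := by
  have hprod : ∏ i ∈ s, f i = (∏ i ∈ s, ‖f i‖ : ℝ) * exp ((∑ i ∈ s, arg (f i) : ℝ) * I) := by
    simp_rw [ofReal_prod, ofReal_sum, sum_mul, exp_sum, ← prod_mul_distrib,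
      norm_mul_exp_arg_mul_I]
  have hrot : exp (-φ * I) * ∏ i ∈ s, f i
      = (∏ i ∈ s, ‖f i‖ : ℝ) * exp ((∑ i ∈ s, arg (f i) - φ : ℝ) * I) := by
    rw [hprod, mul_left_comm, ← exp_add]
    push_cast
    ring_nf
  rw [hrot, re_ofReal_mul, exp_ofReal_mul_I_re]
  exact mul_pos (prod_pos fun i hi ↦ norm_pos_iff.mpr (hf i hi))
    (Real.cos_pos_of_mem_Ioo (abs_lt.mp hφ))

theorem sum_ofReal_mul_ne_zero {ι : Type*} {s : Finset ι} {a : ι → ℝ} {u : ι → ℂ} {c : ℂ}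
    (ha : ∀ i ∈ s, 0 ≤ a i) (hpos : ∃ i ∈ s, 0 < a i) (hu : ∀ i ∈ s, 0 < (c * u i).re) :
    ∑ i ∈ s, (a i : ℂ) * u i ≠ 0 := by
  intro h0
  have : 0 < (c * ∑ i ∈ s, (a i : ℂ) * u i).re := by
    simp_rw [mul_sum, re_sum, mul_left_comm c, re_ofReal_mul]
    obtain ⟨i, hi, hai⟩ := hpos
    exact sum_pos' (fun j hj ↦ mul_nonneg (ha j hj) (hu j hj).le) ⟨i, hi, mul_pos hai (hu i hi)⟩
  simp [h0] at this

end Complex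

theorem binomC_eq (d j : ℕ) (z : ℂ) :
    binomC d j z = (-1) ^ d / d.factorial * ∏ k ∈ range d, (-(z + d) + ((j + k : ℕ) : ℝ)) := by
  calc binomC d j z
      = (∏ k ∈ range d, (-1) * (-(z + d) + ((j + k : ℕ) : ℝ))) / d.factorial := by
        rw [binomC]
        congr 1
        refine prod_congr rfl fun k _ ↦ ?_
        push_cast
        ring
    _ = _ := by rw [prod_mul_distrib, prod_const, card_range]; ring

theorem stmt_5_general (d : ℕ) (h : Fin (d + 1) → ℝ)
    (hnonneg : ∀ j, 0 ≤ h j) (hne : h ≠ 0) (z : ℂ)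
    (hroot : ∑ j : Fin (d + 1), (h j : ℂ) * binomC d (j : ℕ) z = 0) :
    ¬(z.re < -(d : ℝ) ∧ |Complex.arg (-(z + (d : ℂ)))| < Real.pi / d) := by
  rintro ⟨hre, harg⟩
  set w := -(z + d)
  have hw : 0 < w.re := by simp only [w, neg_re, add_re, natCast_re]; linarith
  have hdθ : d * |arg w| < Real.pi := by
    rcases d.eq_zero_or_pos with rfl | hd
    · rw [Nat.cast_zero, div_zero] at harg
      exact absurd harg (abs_nonneg _).not_gt
    · rwa [lt_div_iff₀ (by exact_mod_cast hd), mul_comm] at harg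
  simp_rw [binomC_eq, mul_left_comm _ ((-1) ^ d / _ : ℂ), ← mul_sum] at hroot
  refine sum_ofReal_mul_ne_zero (c := exp (-(d * arg w / 2 : ℝ) * I)) (fun j _ ↦ hnonneg j)
    ?_ (fun j _ ↦ re_exp_mul_prod_pos ?_ ?_)
    ((mul_eq_zero.mp hroot).resolve_left (by simp [Nat.factorial_ne_zero]))
  · obtain ⟨j, hj⟩ := Function.ne_iff.mp hne
    exact ⟨j, mem_univ j, (hnonneg j).lt_of_ne' hj⟩
  · exact fun k _ ↦ ne_of_apply_ne re (by simp only [add_re, ofReal_re, zero_re]; positivity)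
  · have := abs_sum_arg_add_ofReal_sub_le (range d) hw (m := fun k ↦ ((j + k : ℕ) : ℝ))
      (fun _ _ ↦ Nat.cast_nonneg _)
    rw [card_range] at this
    linarith

/-- For `d ≥ 2`, no SNN polynomial of degree `d` has a root in the open pointed cone
with vertex `-d`, angular width `2π/d`, bisecting ray `(-∞, -d)`. -/
theorem stmt_5 (d : ℕ) (hd : 2 ≤ d) (h : Fin (d + 1) → ℝ)
    (hnonneg : ∀ j, 0 ≤ h j) (hne : h ≠ 0) (z : ℂ)
    (hroot : ∑ j : Fin (d + 1), (h j : ℂ) * binomC d (j : ℕ) z = 0) :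
    ¬(z.re < -(d : ℝ) ∧ |Complex.arg (-(z + (d : ℂ)))| < Real.pi / d) :=
  stmt_5_general d h hnonneg hne z hroot
end

section
/- Every root of a degree 3 SNN polynomial z satisfies -3 \le Re(z) \le 2. -/
open Complex Finset

theorem binomC_neg_one_sub {d j : ℕ} (hj : j ≤ d) (z : ℂ) :
    binomC d j (-1 - z) = (-1) ^ d * binomC d (d - j) z := by
  have hsign : (-1 : ℂ) ^ d = (-1) ^ #(range d) := by rw [card_range]
  rw [binomC, binomC, mul_div_assoc', hsign, ← prod_neg, ← prod_range_reflect]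
  congr 1
  refine prod_congr rfl fun k hk => ?_
  have hk : 1 + k ≤ d := Nat.one_add_le_iff.mpr (mem_range.mp hk)
  rw [Nat.sub_sub, Nat.cast_sub hk, Nat.cast_sub hj]
  push_cast
  ring

theorem binomC_three (j : ℕ) (z : ℂ) :
    binomC 3 j z = ((z + 2 - j) ^ 3 - (z + 2 - j)) / 6 := by
  simp only [binomC, prod_range_succ, prod_range_zero, Nat.factorial]
  push_cast
  ring

theorem re_cube_sub_self (a y : ℝ) :
    ((a + y * I) ^ 3 - (a + y * I)).re = a * (a ^ 2 - 3 * y ^ 2 - 1) := by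
  simp only [pow_succ, pow_zero, one_mul, sub_re, mul_re, add_re, ofReal_re, I_re, mul_zero,
    ofReal_im, I_im, mul_one, sub_self, add_zero, add_im, mul_im, zero_add]
  ring

theorem im_cube_sub_self (a y : ℝ) :
    ((a + y * I) ^ 3 - (a + y * I)).im = y * (3 * a ^ 2 - y ^ 2 - 1) := by
  simp only [pow_succ, pow_zero, one_mul, sub_im, mul_im, mul_re, add_re, ofReal_re, I_re, mul_zero,
    ofReal_im, I_im, mul_one, sub_self, add_zero, add_im, zero_add]
  ring

section WeightedMoments

variable {ι : Type*} {s : Finset ι} {p a : ι → ℝ}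

theorem mul_sum_mul_cube_le (hp : ∀ j ∈ s, 0 ≤ p j)
    (hspread : ∀ j ∈ s, ∀ k ∈ s, a j ≤ a k + 3) :
    (∑ j ∈ s, p j) * ∑ j ∈ s, p j * a j ^ 3 ≤
      (∑ j ∈ s, p j * a j ^ 2) * ∑ j ∈ s, p j * (a j + 3) := by
  have hmax : ∀ j ∈ s, (∑ k ∈ s, p k) * a j ≤ ∑ k ∈ s, p k * (a k + 3) := by
    intro j hj
    rw [sum_mul]
    exact sum_le_sum fun k hk => mul_le_mul_of_nonneg_left (hspread j hj k hk) (hp k hk)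
  rw [mul_sum, sum_mul]
  refine sum_le_sum fun j hj => ?_
  calc (∑ k ∈ s, p k) * (p j * a j ^ 3) = p j * a j ^ 2 * ((∑ k ∈ s, p k) * a j) := by ring
    _ ≤ p j * a j ^ 2 * ∑ k ∈ s, p k * (a k + 3) :=
      mul_le_mul_of_nonneg_left (hmax j hj) (mul_nonneg (hp j hj) (sq_nonneg _))

theorem sum_mul_cube_sub_self_ne_zero (hp : ∀ j ∈ s, 0 ≤ p j) (hS : 0 < ∑ j ∈ s, p j)
    (ha : ∀ j ∈ s, 1 < a j) (hspread : ∀ j ∈ s, ∀ k ∈ s, a j ≤ a k + 3) (y : ℝ) :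
    ∑ j ∈ s, (p j : ℂ) * ((a j + y * I) ^ 3 - (a j + y * I)) ≠ 0 := by
  intro hsum
  have hre := congrArg re hsum
  have him := congrArg im hsum
  simp only [re_sum, im_sum, re_ofReal_mul, im_ofReal_mul, re_cube_sub_self, im_cube_sub_self,
    zero_re, zero_im] at hre him
  have hA : ∑ j ∈ s, p j ≤ ∑ j ∈ s, p j * a j :=
    sum_le_sum fun j hj => le_mul_of_one_le_right (hp j hj) (ha j hj).le
  have hB : ∑ j ∈ s, p j ≤ ∑ j ∈ s, p j * a j ^ 2 :=
    sum_le_sum fun j hj => le_mul_of_one_le_right (hp j hj) (one_le_pow₀ (ha j hj).le)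
  rcases eq_or_ne y 0 with rfl | hy
  · have hcube : ∀ j ∈ s, 0 < a j * (a j ^ 2 - 3 * 0 ^ 2 - 1) := fun j hj => by
      nlinarith [ha j hj]
    obtain ⟨j, hj, hpj⟩ := exists_ne_zero_of_sum_ne_zero hS.ne'
    exact hre.not_gt (sum_pos' (fun k hk => mul_nonneg (hp k hk) (hcube k hk).le)
      ⟨j, hj, mul_pos ((hp j hj).lt_of_ne' hpj) (hcube j hj)⟩)
  · set S := ∑ j ∈ s, p j
    set A := ∑ j ∈ s, p j * a j
    set B := ∑ j ∈ s, p j * a j ^ 2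
    have hBS : 3 * B = (1 + y ^ 2) * S := by
      have : y * (3 * B - (1 + y ^ 2) * S) = 0 := by
        rw [← him]
        simp only [S, B, mul_sum, ← sum_sub_distrib]
        exact sum_congr rfl fun j _ => by ring
      linarith [(mul_eq_zero.mp this).resolve_left hy]
    have hCA : ∑ j ∈ s, p j * a j ^ 3 = (1 + 3 * y ^ 2) * A := by
      rw [← sub_eq_zero, ← hre]
      simp only [A, mul_sum, ← sum_sub_distrib]
      exact sum_congr rfl fun j _ => by ring
    have hbound := mul_sum_mul_cube_le hp hspread
    simp only [mul_add, sum_add_distrib, ← sum_mul] at hbound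
    rw [hCA] at hbound
    nlinarith [mul_nonneg (hS.le.trans hA) (sub_nonneg.mpr hB),
      mul_pos (hS.trans_le hB) (by linarith : 0 < 2 * A - S)]

end WeightedMoments

theorem re_le_two_of_sum_mul_binomC_eq_zero (h : Fin 4 → ℝ) (hnonneg : ∀ j, 0 ≤ h j)
    (hS : 0 < ∑ j, h j) (z : ℂ) (hroot : ∑ j : Fin 4, (h j : ℂ) * binomC 3 j z = 0) :
    z.re ≤ 2 := by
  by_contra! hz
  have hj : ∀ j : Fin 4, (j : ℝ) ≤ 3 := fun j => by exact_mod_cast Nat.le_of_lt_succ j.is_lt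
  refine sum_mul_cube_sub_self_ne_zero (s := univ) (a := fun j : Fin 4 => z.re + 2 - j)
    (fun j _ => hnonneg j) hS (fun j _ => by linarith [hj j])
    (fun j _ k _ => by linarith [hj k, Nat.cast_nonneg (α := ℝ) j]) z.im ?_
  have hw : ∀ j : Fin 4, ((z.re + 2 - j : ℝ) : ℂ) + z.im * I = z + 2 - j := fun j =>
    Complex.ext (by simp) (by simp)
  simp only [hw]
  calc _ = 6 * ∑ j : Fin 4, (h j : ℂ) * binomC 3 j z := by
          simp only [binomC_three, mul_sum]
          exact sum_congr rfl fun j _ => by ring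
    _ = 0 := by rw [hroot, mul_zero]

/-- Every root `z` of a degree `3` SNN polynomial satisfies `-3 ≤ Re z ≤ 2`. -/
theorem stmt_7 (h : Fin 4 → ℝ)
    (hnonneg : ∀ j, 0 ≤ h j) (hne : h ≠ 0) (z : ℂ)
    (hroot : ∑ j : Fin 4, (h j : ℂ) * binomC 3 (j : ℕ) z = 0) :
    -3 ≤ z.re ∧ z.re ≤ 2 := by
  obtain ⟨i, hi⟩ := Function.ne_iff.mp hne
  have hS : 0 < ∑ j, h j :=
    sum_pos' (fun j _ => hnonneg j) ⟨i, mem_univ i, (hnonneg i).lt_of_ne' hi⟩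
  refine ⟨?_, re_le_two_of_sum_mul_binomC_eq_zero h hnonneg hS z hroot⟩
  have hreflect : ∑ j : Fin 4, (h j.rev : ℂ) * binomC 3 j (-1 - z) = 0 := by
    calc _ = -∑ j : Fin 4, (h j.rev : ℂ) * binomC 3 j.rev z := by
          simp only [← sum_neg_distrib]
          refine sum_congr rfl fun j _ => ?_
          rw [binomC_neg_one_sub (Nat.le_of_lt_succ j.is_lt), Fin.val_rev,
            show 4 - ((j : ℕ) + 1) = 3 - j by omega]
          ring
      _ = -∑ j : Fin 4, (h j : ℂ) * binomC 3 j z :=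
          congrArg Neg.neg (Fintype.sum_equiv Fin.revPerm _ _ fun _ => rfl)
      _ = 0 := by rw [hroot, neg_zero]
  have hS_rev : 0 < ∑ j, (h ∘ Fin.rev) j :=
    hS.trans_eq (Fintype.sum_equiv Fin.revPerm h (h ∘ Fin.rev) fun j => by simp)
  have hre := re_le_two_of_sum_mul_binomC_eq_zero (h ∘ Fin.rev) (fun j => hnonneg _) hS_rev
    (-1 - z) hreflect
  simp only [sub_re, neg_re, one_re] at hre
  linarith
end

section
/- The roots of any degree 2 SNN polynomial are contained in [-3, 2] \cup {x + iy \in \mathbb{C} : y^2 \le -x^2 - x + 1/2}. -/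
/-!
Twice `∑ hⱼ C(z + 2 - j, 2)` is the real quadratic `s z² + b z + c` with `s = h₀ + h₁ + h₂`,
`b = 3h₀ + h₁ - h₂`, `c = 2h₀`. A non-real root `x + iy` comes with its conjugate, so
`2sx = -b` and `s(x² + y²) = c`; hence `s(-x² - x + 1/2 - y²) = (b + s)/2 - c = h₁ ≥ 0`.
A real root lies in `[-2, 1]`, because outside that interval every `(x + 2 - j)(x + 1 - j)`,
`j ≤ 2`, is positive.
-/

theorem binomC_two_ofReal (j : ℕ) (x : ℝ) :
    binomC 2 j x = ((x + 2 - j) * (x + 1 - j) / 2 : ℝ) := by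
  simp only [binomC, Finset.prod_range_succ, Finset.prod_range_zero]
  push_cast
  ring

theorem two_mul_sum_binomC_two (h : Fin 3 → ℝ) (z : ℂ) :
    2 * ∑ j : Fin 3, (h j : ℂ) * binomC 2 j z =
      ((h 0 + h 1 + h 2 : ℝ) : ℂ) * z ^ 2 + ((3 * h 0 + h 1 - h 2 : ℝ) : ℂ) * z +
        ((2 * h 0 : ℝ) : ℂ) := by
  simp only [binomC, Fin.sum_univ_three, Finset.prod_range_succ, Finset.prod_range_zero,
    Fin.val_zero, Fin.val_one, Fin.val_two]
  push_cast
  ring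

theorem Complex.vieta_of_quadratic_eq_zero_of_im_ne_zero {a b c : ℝ} {z : ℂ}
    (hz : (a : ℂ) * z ^ 2 + b * z + c = 0) (hy : z.im ≠ 0) :
    2 * a * z.re + b = 0 ∧ a * (z.re ^ 2 + z.im ^ 2) = c := by
  have hre := congrArg Complex.re hz
  have him := congrArg Complex.im hz
  simp only [pow_two, Complex.add_re, Complex.mul_re, Complex.ofReal_re, Complex.ofReal_im,
    Complex.mul_im, zero_mul, sub_zero, Complex.zero_re, Complex.add_im, add_zero,
    Complex.zero_im] at hre him
  have hsum : 2 * a * z.re + b = 0 :=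
    (mul_eq_zero.mp (by linear_combination him)).resolve_left hy
  exact ⟨hsum, by linear_combination -hre + z.re * hsum⟩

theorem add_two_sub_mul_add_one_sub_pos {j : ℕ} (hj : j ≤ 2) {x : ℝ} (hx : x < -2 ∨ 1 < x) :
    0 < (x + 2 - j) * (x + 1 - j) := by
  have hj0 : (0 : ℝ) ≤ j := j.cast_nonneg
  have hj2 : (j : ℝ) ≤ 2 := by exact_mod_cast hj
  rcases hx with hx | hx
  · exact mul_pos_of_neg_of_neg (by linarith) (by linarith)
  · exact mul_pos (by linarith) (by linarith)

theorem exists_pos_of_nonneg_of_ne_zero {ι : Type*} {h : ι → ℝ} (hnonneg : ∀ j, 0 ≤ h j)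
    (hne : h ≠ 0) : ∃ j, 0 < h j := by
  obtain ⟨j, hj⟩ := Function.ne_iff.mp hne
  exact ⟨j, (hnonneg j).lt_of_ne' hj⟩

theorem mem_Icc_of_sum_binomC_two_eq_zero {h : Fin 3 → ℝ} (hnonneg : ∀ j, 0 ≤ h j)
    (hne : h ≠ 0) {x : ℝ} (hroot : ∑ j : Fin 3, (h j : ℂ) * binomC 2 j x = 0) :
    x ∈ Set.Icc (-2) 1 := by
  by_contra hx
  have hx : x < -2 ∨ 1 < x := by
    simpa only [Set.mem_Icc, not_and_or, not_le] using hx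
  have hterm (j : Fin 3) : 0 < (x + 2 - j) * (x + 1 - j) / 2 :=
    half_pos (add_two_sub_mul_add_one_sub_pos (Nat.le_of_lt_succ j.2) hx)
  have hpos : 0 < ∑ j : Fin 3, h j * ((x + 2 - j) * (x + 1 - j) / 2) := by
    obtain ⟨i, hi⟩ := exists_pos_of_nonneg_of_ne_zero hnonneg hne
    exact Finset.sum_pos' (fun j _ => mul_nonneg (hnonneg j) (hterm j).le)
      ⟨i, Finset.mem_univ i, mul_pos hi (hterm i)⟩
  simp only [binomC_two_ofReal] at hroot
  exact hpos.ne' (by exact_mod_cast hroot)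

/-- The roots of any degree `2` SNN polynomial are contained in
`[-3,2] ∪ {x + iy : y² ≤ -x² - x + 1/2}`. -/
theorem stmt_9 (h : Fin 3 → ℝ)
    (hnonneg : ∀ j, 0 ≤ h j) (hne : h ≠ 0) (z : ℂ)
    (hroot : ∑ j : Fin 3, (h j : ℂ) * binomC 2 (j : ℕ) z = 0) :
    (z.im = 0 ∧ -3 ≤ z.re ∧ z.re ≤ 2) ∨ z.im ^ 2 ≤ -z.re ^ 2 - z.re + 1 / 2 := by
  rcases eq_or_ne z.im 0 with hy | hy
  · rw [show z = (z.re : ℂ) from Complex.ext rfl hy] at hroot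
    obtain ⟨hlo, hhi⟩ := mem_Icc_of_sum_binomC_two_eq_zero hnonneg hne hroot
    exact .inl ⟨hy, by linarith, by linarith⟩
  · right
    obtain ⟨hsum, hprod⟩ := Complex.vieta_of_quadratic_eq_zero_of_im_ne_zero
      (by rw [← two_mul_sum_binomC_two, hroot, mul_zero]) hy
    have hs : 0 < h 0 + h 1 + h 2 := by
      obtain ⟨i, hi⟩ := exists_pos_of_nonneg_of_ne_zero hnonneg hne
      rw [← Fin.sum_univ_three]
      exact Finset.sum_pos' (fun j _ => hnonneg j) ⟨i, Finset.mem_univ i, hi⟩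
    refine le_of_mul_le_mul_left ?_ hs
    linear_combination hnonneg 1 + hprod + hsum / 2
end

section
/- The polynomial f(t) = \binom{t+5}{5} + 33\binom{t}{5} has a complex root z with Re(z) > 4. -/
open Polynomial Complex

theorem norm_reflect_sub_le {a : ℝ} {w r : ℂ} (hr : r.re ≤ a) (hw : a ≤ w.re) :
    ‖(⟨2 * a - w.re, w.im⟩ : ℂ) - r‖ ≤ ‖w - r‖ := by
  rw [← sq_le_sq₀ (norm_nonneg _) (norm_nonneg _), ← normSq_eq_norm_sq, ← normSq_eq_norm_sq,
    normSq_apply, normSq_apply]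
  simp only [sub_re, sub_im]
  -- the two squared distances differ by `4 (w.re - a) (a - r.re)`
  nlinarith [mul_nonneg (sub_nonneg.2 hw) (sub_nonneg.2 hr)]

theorem norm_eval_reflect_le {p : ℂ[X]} {a : ℝ} (hroots : ∀ r ∈ p.roots, r.re ≤ a) {w : ℂ}
    (hw : a ≤ w.re) : ‖p.eval ⟨2 * a - w.re, w.im⟩‖ ≤ ‖p.eval w‖ := by
  have norm_prod (s : Multiset ℂ) : ‖s.prod‖ = (s.map (‖·‖)).prod :=
    map_multiset_prod (normHom : ℂ →*₀ ℝ) s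
  simp only [(IsAlgClosed.splits p).eval_eq_prod_roots, norm_mul, norm_prod, Multiset.map_map,
    Function.comp_def]
  gcongr
  exact Multiset.prod_map_le_prod_map₀ _ _ (fun _ _ ↦ norm_nonneg _)
    fun r hr ↦ norm_reflect_sub_le (hroots r hr) hw

theorem exists_mem_roots_lt_re_of_norm_eval_lt {p : ℂ[X]} {a : ℝ} {w : ℂ} (hw : a ≤ w.re)
    (hlt : ‖p.eval w‖ < ‖p.eval ⟨2 * a - w.re, w.im⟩‖) : ∃ r ∈ p.roots, a < r.re := by
  by_contra! h
  exact (norm_eval_reflect_le h hw).not_gt hlt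

noncomputable def quintic : ℂ[X] :=
  C 34 * X ^ 5 - C 315 * X ^ 4 + C 1240 * X ^ 3 - C 1425 * X ^ 2 + C 1066 * X + C 120

theorem binomC_add_eq_eval_quintic (z : ℂ) :
    binomC 5 0 z + 33 * binomC 5 5 z = quintic.eval z / 120 := by
  simp only [binomC, quintic, Finset.prod_range_succ, Finset.prod_range_zero, eval_add, eval_sub,
    eval_mul, eval_pow, eval_C, eval_X]
  push_cast [Nat.factorial]
  ring

theorem norm_eval_quintic_lt :
    ‖quintic.eval ⟨401 / 100, 3⟩‖ < ‖quintic.eval ⟨2 * 4 - 401 / 100, 3⟩‖ := by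
  rw [← sq_lt_sq₀ (norm_nonneg _) (norm_nonneg _), ← normSq_eq_norm_sq, ← normSq_eq_norm_sq]
  simp only [quintic, eval_add, eval_sub, eval_mul, eval_C, eval_X, pow_succ, pow_zero, one_mul,
    normSq_apply, mul_re, mul_im, add_re, add_im, sub_re, sub_im, re_ofNat, im_ofNat]
  norm_num

/-- The polynomial `f(t) = C(t+5,5) + 33·C(t,5)` has a complex root `z` with `Re z > 4`. -/
theorem stmt_10 :
    ∃ z : ℂ, binomC 5 0 z + 33 * binomC 5 5 z = 0 ∧ 4 < z.re := by
  obtain ⟨z, hz, hre⟩ := exists_mem_roots_lt_re_of_norm_eval_lt (by norm_num) norm_eval_quintic_lt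
  refine ⟨z, ?_, hre⟩
  rw [binomC_add_eq_eval_quintic, (mem_roots'.mp hz).2.eq_zero, zero_div]
end

section
/- Every complex root z of the polynomial M_d(t) = \binom{t+d}{d} + \binom{t}{d} has real part equal to -1/2. -/
open Finset

lemma Finset.prod_lt_prod_of_nonempty_of_nonneg {ι R : Type*} [CommSemiring R] [LinearOrder R]
    [IsStrictOrderedRing R] {s : Finset ι} {f g : ι → R} (hs : s.Nonempty)
    (hf : ∀ i ∈ s, 0 ≤ f i) (hfg : ∀ i ∈ s, f i < g i) :
    ∏ i ∈ s, f i < ∏ i ∈ s, g i := by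
  have hg : 0 < ∏ i ∈ s, g i := prod_pos fun i hi => (hf i hi).trans_lt (hfg i hi)
  by_cases hpos : ∀ i ∈ s, 0 < f i
  · exact prod_lt_prod_of_nonempty hpos hfg hs
  · push Not at hpos
    obtain ⟨i, hi, hfi⟩ := hpos
    rwa [prod_eq_zero hi (le_antisymm hfi (hf i hi))]

lemma binomC_zero_eq (d : ℕ) (z : ℂ) :
    binomC d 0 z = (∏ j ∈ range d, (z + (j + 1))) / d.factorial := by
  rw [binomC, ← prod_range_reflect]
  congr 1
  refine prod_congr rfl fun j hj => ?_
  rw [Nat.cast_sub (by simp at hj; omega), Nat.cast_sub (by simp at hj; omega)]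
  push_cast
  ring

lemma binomC_self_eq (d : ℕ) (z : ℂ) :
    binomC d d z = (∏ j ∈ range d, (z - j)) / d.factorial := by
  simp only [binomC, add_sub_cancel_right]

lemma prod_norm_add_succ_eq_prod_norm_sub {d : ℕ} {z : ℂ}
    (hroot : binomC d 0 z + binomC d d z = 0) :
    ∏ j ∈ range d, ‖z + (j + 1)‖ = ∏ j ∈ range d, ‖z - j‖ := by
  rw [binomC_zero_eq, binomC_self_eq, ← add_div, div_eq_zero_iff, add_eq_zero_iff_eq_neg] at hroot
  rcases hroot with h | h
  · simpa only [norm_prod, norm_neg] using congrArg norm h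
  · exact absurd h (Nat.cast_ne_zero.mpr d.factorial_ne_zero)

lemma Complex.normSq_add_add_one_sub_normSq_sub (z : ℂ) (a : ℝ) :
    normSq (z + (a + 1)) - normSq (z - a) = (2 * z.re + 1) * (2 * a + 1) := by
  simp only [normSq_apply, add_re, add_im, sub_re, sub_im, ofReal_re, ofReal_im, one_re, one_im]
  ring

lemma Complex.norm_lt_norm_iff_normSq_lt {w v : ℂ} : ‖w‖ < ‖v‖ ↔ normSq w < normSq v := by
  rw [normSq_eq_norm_sq, normSq_eq_norm_sq, sq_lt_sq₀ (norm_nonneg w) (norm_nonneg v)]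

lemma Complex.norm_sub_lt_norm_add_succ {z : ℂ} (hz : -(1 / 2) < z.re) (j : ℕ) :
    ‖z - j‖ < ‖z + (j + 1)‖ := by
  have hdiff := normSq_add_add_one_sub_normSq_sub z j
  push_cast at hdiff
  rw [norm_lt_norm_iff_normSq_lt]
  nlinarith [(Nat.cast_nonneg j : (0 : ℝ) ≤ j)]

lemma Complex.norm_add_succ_lt_norm_sub {z : ℂ} (hz : z.re < -(1 / 2)) (j : ℕ) :
    ‖z + (j + 1)‖ < ‖z - j‖ := by
  have hdiff := normSq_add_add_one_sub_normSq_sub z j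
  push_cast at hdiff
  rw [norm_lt_norm_iff_normSq_lt]
  nlinarith [(Nat.cast_nonneg j : (0 : ℝ) ≤ j)]

/-- Every complex root of `M_d(t) = C(t+d,d) + C(t,d)` has real part `-1/2`. -/
theorem stmt_11 (d : ℕ) (hd : 1 ≤ d) (z : ℂ)
    (hroot : binomC d 0 z + binomC d d z = 0) :
    z.re = -(1 / 2) := by
  have hprod := prod_norm_add_succ_eq_prod_norm_sub hroot
  have hne : (range d).Nonempty := nonempty_range_iff.mpr (by omega)
  rcases lt_trichotomy z.re (-(1 / 2)) with hlt | heq | hgt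
  · exact absurd hprod (prod_lt_prod_of_nonempty_of_nonneg hne (fun _ _ => norm_nonneg _)
      fun j _ => Complex.norm_add_succ_lt_norm_sub hlt j).ne
  · exact heq
  · exact absurd hprod (prod_lt_prod_of_nonempty_of_nonneg hne (fun _ _ => norm_nonneg _)
      fun j _ => Complex.norm_sub_lt_norm_add_succ hgt j).ne'
end

section
/- If z = -1/2 + bi with b > 0, then z is a root of M_d(t) = \binom{t+d}{d} + \binom{t}{d} if and only if \sum_{j=0}^{d-1} cot^{-1}(b / (j + 1/2)) is an odd multiple of \pi/2. -/
/-!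
Write `z = -1/2 + b i` and `u_k = b + (k + 1/2) i`. The factors of `C(z + d, d)` are
`z + k + 1 = i · conj u_k` and those of `C(z, d)` are `z - k = i · u_k`, so
`d! · M_d(z) = i^d (conj U + U) = 2 i^d Re U` with `U = ∏ u_k`. Since `Re u_k = b > 0`,
`arg u_k = arctan((k + 1/2)/b)`, hence `Re U = |U| cos(∑ arg u_k)`, which vanishes exactly when
the sum of the arguments is an odd multiple of `π/2`.
-/

open Finset Real

namespace Complex

theorem arg_of_re_pos {x : ℂ} (hx : 0 < x.re) : arg x = Real.arctan (x.im / x.re) := by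
  have h := abs_arg_lt_pi_div_two_iff.mpr (Or.inl hx)
  rw [← tan_arg, Real.arctan_tan (neg_lt_of_abs_lt h) (lt_of_abs_lt h)]

theorem re_prod_eq_prod_norm_mul_cos_sum_arg {ι : Type*} (s : Finset ι) (z : ι → ℂ) :
    (∏ j ∈ s, z j).re = (∏ j ∈ s, ‖z j‖) * Real.cos (∑ j ∈ s, arg (z j)) := by
  conv_lhs => rw [← prod_congr rfl fun j _ => norm_mul_exp_arg_mul_I (z j)]
  rw [prod_mul_distrib, ← exp_sum, ← sum_mul, ← ofReal_prod, ← ofReal_sum, re_ofReal_mul,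
    exp_ofReal_mul_I_re]

end Complex

theorem Real.cos_eq_zero_iff_exists_odd {θ : ℝ} :
    Real.cos θ = 0 ↔ ∃ k : ℤ, Odd k ∧ θ = k * (π / 2) := by
  rw [Real.cos_eq_zero_iff]
  constructor
  · rintro ⟨m, rfl⟩
    exact ⟨2 * m + 1, odd_two_mul_add_one m, by push_cast; ring⟩
  · rintro ⟨k, ⟨m, rfl⟩, rfl⟩
    exact ⟨m, by push_cast; ring⟩

theorem binomC_zero (d : ℕ) (z : ℂ) :
    binomC d 0 z = (∏ k ∈ range d, (z + (k + 1))) / d.factorial := by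
  rw [binomC, ← prod_range_reflect (fun k : ℕ => z + (k + 1))]
  congr 1
  refine prod_congr rfl fun k hk => ?_
  rw [Nat.cast_sub (by simp at hk; omega), Nat.cast_sub (by simp at hk; omega)]
  push_cast
  ring

theorem binomC_self (d : ℕ) (z : ℂ) :
    binomC d d z = (∏ k ∈ range d, (z - k)) / d.factorial := by
  simp [binomC]

open Complex ComplexConjugate in
theorem binomC_zero_add_binomC_self_neg_half (d : ℕ) (b : ℝ) :
    binomC d 0 ⟨-(1 / 2), b⟩ + binomC d d ⟨-(1 / 2), b⟩ =
      I ^ d * (2 * (∏ k ∈ range d, (⟨b, k + 1 / 2⟩ : ℂ)).re) / d.factorial := by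
  have h_shift (k : ℕ) : (⟨-(1 / 2), b⟩ : ℂ) + (k + 1) = I * conj ⟨b, k + 1 / 2⟩ := by
    apply Complex.ext <;> simp; ring
  have h_sub (k : ℕ) : (⟨-(1 / 2), b⟩ : ℂ) - k = I * ⟨b, k + 1 / 2⟩ := by
    apply Complex.ext <;> simp; ring
  rw [binomC_zero, binomC_self, prod_congr rfl fun k _ => h_shift k,
    prod_congr rfl fun k _ => h_sub k, prod_mul_distrib, prod_mul_distrib, ← map_prod,
    prod_const, card_range, ← add_div, ← mul_add, add_comm, add_conj]
  push_cast
  ring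

theorem stmt_13_general (d : ℕ) (b : ℝ) (hb : 0 < b) :
    (binomC d 0 (⟨-(1 / 2), b⟩ : ℂ) + binomC d d (⟨-(1 / 2), b⟩ : ℂ) = 0) ↔
      ∃ k : ℤ, Odd k ∧
        ∑ j ∈ Finset.range d, Real.arctan (((j : ℝ) + 1 / 2) / b) = (k : ℝ) * (Real.pi / 2) := by
  have h_arg (k : ℕ) : Complex.arg ⟨b, k + 1 / 2⟩ = arctan ((k + 1 / 2) / b) :=
    Complex.arg_of_re_pos hb
  have h_norm : ∏ k ∈ range d, ‖(⟨b, k + 1 / 2⟩ : ℂ)‖ ≠ 0 :=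
    prod_ne_zero_iff.mpr fun k _ => norm_ne_zero_iff.mpr fun h => hb.ne' (congrArg Complex.re h)
  rw [binomC_zero_add_binomC_self_neg_half, div_eq_zero_iff, mul_eq_zero, mul_eq_zero]
  simp only [pow_eq_zero_iff', Complex.I_ne_zero, false_and, two_ne_zero, Complex.ofReal_eq_zero,
    Nat.cast_eq_zero, Nat.factorial_ne_zero, false_or, or_false]
  rw [Complex.re_prod_eq_prod_norm_mul_cos_sum_arg, mul_eq_zero, or_iff_right h_norm]
  simp only [h_arg, Real.cos_eq_zero_iff_exists_odd]

/-- For `z = -1/2 + b·i` with `b > 0`, `z` is a root of `M_d(t) = C(t+d,d) + C(t,d)` iff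
`∑_{j=0}^{d-1} cot⁻¹(b/(j+1/2))` is an odd multiple of `π/2`, where
`cot⁻¹(b/(j+1/2)) = arctan((j+1/2)/b)`. -/
theorem stmt_13 (d : ℕ) (hd : 1 ≤ d) (b : ℝ) (hb : 0 < b) :
    (binomC d 0 (⟨-(1 / 2), b⟩ : ℂ) + binomC d d (⟨-(1 / 2), b⟩ : ℂ) = 0) ↔
      ∃ k : ℤ, Odd k ∧
        ∑ j ∈ Finset.range d, Real.arctan (((j : ℝ) + 1 / 2) / b) = (k : ℝ) * (Real.pi / 2) :=
  stmt_13_general d b hb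
end

section
/- If b_d denotes the unique positive real with \sum_{j=0}^{d-1} cot^{-1}(b_d/(j+1/2)) = \pi/2, then b_d = d^2/\pi + O(1) as d \to \infty; equivalently, the root \beta_d of M_d(t) of maximal norm satisfies |\beta_d + 1/2| = d^2/\pi + O(1). -/
/-!
Write `x_j = (j + 1/2) / b` for the root `b = b_d`, so that `∑ x_j = d² / (2b)`. From
`arctan x ≤ x` one gets `π/2 ≤ d² / (2b)`, i.e. `π b ≤ d²`. From `arctan x ≥ x / (1 + x²)` and
`x_j ≤ d / b` one gets `π/2 ≥ b d² / (2 (b² + d²))`; this quadratic inequality in `b` says that `b`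
is either `O(1)` or at least `d²/π - 2π`, and the first alternative is excluded for large `d`
because every one of the `d` terms is at least `arctan (1 / (2b))`.
-/

open Filter Asymptotics Real Finset

namespace Real

lemma arctan_le_self {x : ℝ} (hx : 0 ≤ x) : arctan x ≤ x := by
  simpa only [tan_arctan] using le_tan (arctan_nonneg.2 hx) (arctan_lt_pi_div_two x)

-- `x / (1 + x²) = sin (2 arctan x) / 2`.
lemma div_one_add_sq_le_arctan {x : ℝ} (hx : 0 ≤ x) : x / (1 + x ^ 2) ≤ arctan x := by
  have hsqrt : √(1 + x ^ 2) ^ 2 = 1 + x ^ 2 := sq_sqrt (by positivity)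
  have hsin : sin (2 * arctan x) = 2 * (x / (1 + x ^ 2)) := by
    rw [sin_two_mul, sin_arctan, cos_arctan]
    field_simp
    rw [hsqrt]
  linarith [sin_le (by positivity : 0 ≤ 2 * arctan x)]

end Real

lemma sum_range_add_half (d : ℕ) : ∑ j ∈ range d, ((j : ℝ) + 1 / 2) = (d : ℝ) ^ 2 / 2 := by
  induction d with
  | zero => simp
  | succ n ih => rw [sum_range_succ, ih]; push_cast; ring

/-- The function `p_d` of the paper, using `cot⁻¹ (b / (j + 1/2)) = arctan ((j + 1/2) / b)`. -/
noncomputable def arctanSum (d : ℕ) (b : ℝ) : ℝ :=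
  ∑ j ∈ range d, arctan (((j : ℝ) + 1 / 2) / b)

section arctanSum

variable {d : ℕ} {b : ℝ}

lemma arctanSum_le (hb : 0 ≤ b) : arctanSum d b ≤ (d : ℝ) ^ 2 / (2 * b) :=
  calc arctanSum d b ≤ ∑ j ∈ range d, ((j : ℝ) + 1 / 2) / b :=
        sum_le_sum fun j _ => arctan_le_self (by positivity)
    _ = (d : ℝ) ^ 2 / (2 * b) := by rw [← sum_div, sum_range_add_half, div_div]

lemma div_le_arctanSum (hb : 0 < b) :
    b * (d : ℝ) ^ 2 / (2 * (b ^ 2 + (d : ℝ) ^ 2)) ≤ arctanSum d b := by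
  have hterm : ∀ j ∈ range d,
      b * ((j : ℝ) + 1 / 2) / (b ^ 2 + (d : ℝ) ^ 2) ≤ arctan (((j : ℝ) + 1 / 2) / b) := by
    intro j hj
    have hjd : (j : ℝ) + 1 / 2 ≤ d := by
      have : (j : ℝ) + 1 ≤ d := by exact_mod_cast mem_range.1 hj
      linarith
    calc b * ((j : ℝ) + 1 / 2) / (b ^ 2 + (d : ℝ) ^ 2)
        ≤ b * ((j : ℝ) + 1 / 2) / (b ^ 2 + ((j : ℝ) + 1 / 2) ^ 2) := by gcongr
      _ = ((j : ℝ) + 1 / 2) / b / (1 + (((j : ℝ) + 1 / 2) / b) ^ 2) := by field_simp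
      _ ≤ arctan (((j : ℝ) + 1 / 2) / b) := div_one_add_sq_le_arctan (by positivity)
  calc b * (d : ℝ) ^ 2 / (2 * (b ^ 2 + (d : ℝ) ^ 2))
      = ∑ j ∈ range d, b * ((j : ℝ) + 1 / 2) / (b ^ 2 + (d : ℝ) ^ 2) := by
        rw [← sum_div, ← mul_sum, sum_range_add_half]; field_simp
    _ ≤ arctanSum d b := sum_le_sum hterm

lemma natCast_mul_arctan_le_arctanSum (hb : 0 < b) :
    d * arctan (1 / (2 * b)) ≤ arctanSum d b := by
  have hterm : ∀ j ∈ range d, arctan (1 / (2 * b)) ≤ arctan (((j : ℝ) + 1 / 2) / b) := by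
    intro j _
    rw [arctan_le_arctan_iff, div_le_div_iff₀ (by positivity) hb]
    nlinarith [j.cast_nonneg (α := ℝ)]
  have := card_nsmul_le_sum (range d) _ _ hterm
  rwa [card_range, nsmul_eq_mul] at this

lemma pi_mul_le_sq_of_pi_div_two_le_arctanSum (hb : 0 < b) (h : π / 2 ≤ arctanSum d b) :
    π * b ≤ (d : ℝ) ^ 2 := by
  have := h.trans (arctanSum_le hb.le)
  rw [le_div_iff₀ (by positivity)] at this
  linarith

lemma two_pi_le_of_arctanSum_le (hd : π / 2 < d * arctan (1 / (4 * π))) (hb : 0 < b)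
    (h : arctanSum d b ≤ π / 2) : 2 * π ≤ b := by
  have hlt : arctan (1 / (2 * b)) < arctan (1 / (4 * π)) := by
    by_contra! hge
    have := (natCast_mul_arctan_le_arctanSum hb).trans h
    nlinarith [mul_le_mul_of_nonneg_left hge d.cast_nonneg]
  rw [arctan_lt_arctan_iff, one_div_lt_one_div (by positivity) (by positivity)] at hlt
  linarith

lemma sq_le_pi_mul_add_of_arctanSum_le (hb : 2 * π ≤ b) (h : arctanSum d b ≤ π / 2) :
    (d : ℝ) ^ 2 ≤ π * b + 2 * π ^ 2 := by
  have hb0 : 0 < b := by linarith [pi_pos]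
  have hquad : b * (d : ℝ) ^ 2 ≤ π * (b ^ 2 + (d : ℝ) ^ 2) := by
    have := (div_le_arctanSum hb0).trans h
    rw [div_le_div_iff₀ (by positivity) two_pos] at this
    linarith
  -- if `d² > π b + 2π²` then `d² (b - π) > π b² + π² (b - 2π) ≥ π b²`
  by_contra! hd
  nlinarith [mul_lt_mul_of_pos_right hd (by linarith : 0 < b - π)]

end arctanSum

/-- If `b_d` is the unique positive real with `∑_{j=0}^{d-1} cot⁻¹(b_d/(j+1/2)) = π/2`
(with `cot⁻¹(b/(j+1/2)) = arctan((j+1/2)/b)`), then `b_d = d²/π + O(1)` as `d → ∞`. -/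
theorem stmt_16 (b : ℕ → ℝ)
    (hpos : ∀ d, 1 ≤ d → 0 < b d)
    (hroot : ∀ d, 1 ≤ d →
      ∑ j ∈ Finset.range d, Real.arctan (((j : ℝ) + 1 / 2) / b d) = Real.pi / 2) :
    (fun d : ℕ => b d - (d : ℝ) ^ 2 / Real.pi) =O[atTop] (fun _ : ℕ => (1 : ℝ)) := by
  obtain ⟨N, hN⟩ := exists_nat_gt (π / 2 / arctan (1 / (4 * π)))
  refine IsBigO.of_bound (2 * π) ?_
  filter_upwards [eventually_ge_atTop (max N 1)] with d hd
  have hd1 : 1 ≤ d := le_of_max_le_right hd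
  have hb := hpos d hd1
  have h : arctanSum d (b d) = π / 2 := hroot d hd1
  have hlarge : π / 2 < d * arctan (1 / (4 * π)) := by
    rw [← div_lt_iff₀ (arctan_pos.2 (by positivity))]
    exact hN.trans_le (by exact_mod_cast le_of_max_le_left hd)
  have hupper := pi_mul_le_sq_of_pi_div_two_le_arctanSum hb h.ge
  have hlower :=
    sq_le_pi_mul_add_of_arctanSum_le (two_pi_le_of_arctanSum_le hlarge hb h.le) h.le
  rw [norm_one, mul_one, norm_eq_abs, abs_sub_comm, abs_le, le_sub_iff_add_le, sub_le_iff_le_add,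
    le_div_iff₀ pi_pos, div_le_iff₀ pi_pos]
  constructor <;> nlinarith [pi_pos]
end

section
/- Let z = x + iy with y > 0 and x > -1/2, let \theta be the angle at 0 in the triangle with vertices 0, z-1, z+1, and let \phi be the angle at 0 in the triangle with vertices 0, z, z+2. Then \theta + \phi > \pi if and only if y^2 < -x^2 - x + 1/2. -/
/-!
For `u, v` in the upper half-plane, `arg u - arg v` is congruent mod `2π` to `arg (u * conj v)`,
so its sine has the sign of `(u * conj v).im`; for the two pairs here that imaginary part is
`2y > 0`, so both angles lie in `(0, π)` and no absolute value matters. Their sum then lies in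
`(0, 2π)` and exceeds `π` iff its sine is negative, i.e. iff the imaginary part of
`(z - 1) conj (z + 1) z conj (z + 2)`, which is `2y (2x² + 2x + 2y² - 1)`, is negative.
-/

open Complex ComplexConjugate Real

lemma sin_eq_im_div_norm_of_coe_eq_arg {t : ℝ} {w : ℂ} (h : (t : Real.Angle) = arg w) :
    Real.sin t = w.im / ‖w‖ := by
  rw [← Real.Angle.sin_coe, h, Real.Angle.sin_coe, sin_arg]

lemma coe_arg_sub_arg {u v : ℂ} (hu : u ≠ 0) (hv : v ≠ 0) :
    ((arg u - arg v : ℝ) : Real.Angle) = arg (u * conj v) := by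
  rw [arg_mul_coe_angle hu ((map_ne_zero _).2 hv), arg_conj_coe_angle, Real.Angle.coe_sub,
    sub_eq_add_neg]

lemma ne_zero_of_im_pos {w : ℂ} (hw : 0 < w.im) : w ≠ 0 := fun h => by simp [h] at hw

lemma arg_sub_arg_mem_Ioo {u v : ℂ} (hu : 0 < u.im) (hv : 0 < v.im)
    (huv : 0 < (u * conj v).im) : arg u - arg v ∈ Set.Ioo 0 π := by
  have hsin : 0 < Real.sin (arg u - arg v) := by
    rw [sin_eq_im_div_norm_of_coe_eq_arg (coe_arg_sub_arg (ne_zero_of_im_pos hu)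
      (ne_zero_of_im_pos hv))]
    exact div_pos huv (norm_pos_iff.2 (ne_zero_of_im_pos huv))
  have hu₀ : 0 ≤ arg u := arg_nonneg_iff.2 hu.le
  have hv₀ : 0 ≤ arg v := arg_nonneg_iff.2 hv.le
  have huπ : arg u < π := arg_lt_pi_iff.2 (Or.inr hu.ne')
  have hvπ : arg v < π := arg_lt_pi_iff.2 (Or.inr hv.ne')
  refine ⟨lt_of_not_ge fun h => hsin.not_ge (sin_nonpos_of_nonpos_of_neg_pi_le h ?_), ?_⟩ <;>
    linarith

lemma pi_lt_iff_sin_neg {s : ℝ} (h0 : 0 < s) (h2 : s < 2 * π) : π < s ↔ Real.sin s < 0 := by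
  refine ⟨fun h => ?_, fun h => lt_of_not_ge fun h' =>
    h.not_ge (sin_nonneg_of_nonneg_of_le_pi h0.le h')⟩
  rw [← Real.sin_sub_two_pi]
  exact sin_neg_of_neg_of_neg_pi_lt (by linarith) (by linarith)

lemma pi_lt_abs_arg_sub_arg_add_abs_arg_sub_arg_iff {u₁ v₁ u₂ v₂ : ℂ}
    (hu₁ : 0 < u₁.im) (hv₁ : 0 < v₁.im) (hu₂ : 0 < u₂.im) (hv₂ : 0 < v₂.im)
    (h₁ : 0 < (u₁ * conj v₁).im) (h₂ : 0 < (u₂ * conj v₂).im) :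
    π < |arg u₁ - arg v₁| + |arg u₂ - arg v₂| ↔ (u₁ * conj v₁ * (u₂ * conj v₂)).im < 0 := by
  obtain ⟨hθ₀, hθπ⟩ := arg_sub_arg_mem_Ioo hu₁ hv₁ h₁
  obtain ⟨hφ₀, hφπ⟩ := arg_sub_arg_mem_Ioo hu₂ hv₂ h₂
  have hw := mul_ne_zero (ne_zero_of_im_pos h₁) (ne_zero_of_im_pos h₂)
  have hangle : ((arg u₁ - arg v₁ + (arg u₂ - arg v₂) : ℝ) : Real.Angle) =
      arg (u₁ * conj v₁ * (u₂ * conj v₂)) := by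
    rw [Real.Angle.coe_add, coe_arg_sub_arg (ne_zero_of_im_pos hu₁) (ne_zero_of_im_pos hv₁),
      coe_arg_sub_arg (ne_zero_of_im_pos hu₂) (ne_zero_of_im_pos hv₂),
      arg_mul_coe_angle (ne_zero_of_im_pos h₁) (ne_zero_of_im_pos h₂)]
  rw [abs_of_pos hθ₀, abs_of_pos hφ₀, pi_lt_iff_sin_neg (by linarith) (by linarith),
    sin_eq_im_div_norm_of_coe_eq_arg hangle, div_lt_iff₀ (norm_pos_iff.2 hw), zero_mul]

theorem stmt_17_general (x y : ℝ) (hy : 0 < y) :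
    (|Complex.arg ((⟨x, y⟩ : ℂ) - 1) - Complex.arg ((⟨x, y⟩ : ℂ) + 1)| +
       |Complex.arg (⟨x, y⟩ : ℂ) - Complex.arg ((⟨x, y⟩ : ℂ) + 2)| > Real.pi) ↔
      y ^ 2 < -x ^ 2 - x + 1 / 2 := by
  set z : ℂ := ⟨x, y⟩
  have him : ((z - 1) * conj (z + 1) * (z * conj (z + 2))).im =
      2 * y * (2 * (x ^ 2 + x + y ^ 2) - 1) := by
    simp only [z, map_add, map_one, mul_im, mul_re, sub_re, add_re, sub_im, add_im, one_re,
      one_im, re_ofNat, im_ofNat, conj_re, conj_im]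
    ring
  rw [gt_iff_lt, pi_lt_abs_arg_sub_arg_add_abs_arg_sub_arg_iff (by simpa [z]) (by simpa [z]) hy
    (by simpa [z]) (by simp [z]; linarith) (by simp [z]; linarith), him,
    ← mul_zero (2 * y), mul_lt_mul_iff_right₀ (by positivity)]
  constructor <;> intro h <;> linarith

/-- Let `z = x + iy` with `y > 0` and `x > -1/2`. Let `θ` be the angle at `0` between
`z - 1` and `z + 1`, and `φ` the angle at `0` between `z` and `z + 2` (each the absolute
difference of arguments). Then `θ + φ > π` iff `y² < -x² - x + 1/2`. -/
theorem stmt_17 (x y : ℝ) (hy : 0 < y) (hx : -(1 / 2) < x) :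
    (|Complex.arg ((⟨x, y⟩ : ℂ) - 1) - Complex.arg ((⟨x, y⟩ : ℂ) + 1)| +
       |Complex.arg (⟨x, y⟩ : ℂ) - Complex.arg ((⟨x, y⟩ : ℂ) + 2)| > Real.pi) ↔
      y ^ 2 < -x ^ 2 - x + 1 / 2 :=
  stmt_17_general x y hy
end
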